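/- Let X be a compact Hausdorff space, φ : X → X a continuous surjection, and L : C(X) → C(X) a transfer operator for α_φ(a) = a ∘ φ which is of finite type (admits a quasi-basis). Then φ is a local homeomorphism and there exists a continuous function ϱ : X → (0,1] with strictly positive values such that ∑_{x ∈ φ⁻¹(φ(x₀))} ϱ(x) = 1 for every x₀ ∈ X and L(a)(y) = ∑_{x ∈ φ⁻¹(y)} ϱ(x)·a(x) for all a ∈ C(X) and y ∈ X. Conversely, if φ : X → X is a surjective local homeomorphism and ϱ : X → (0,1] is a continuous cocycle for φ with strictly positive values, then the formula L(a)(y) = ∑_{x ∈ φ⁻¹(y)} ϱ(x)·a(x) defines a transfer operator for α_φ of finite type. -/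

import Mathlib

open scoped ComplexOrder

/-- `L` is a (unital, positive) transfer operator for the endomorphism
`a ↦ a ∘ φ` of `C(X, ℂ)`. -/
def IsTransferOpC {X : Type*} [TopologicalSpace X] (φ : C(X, X))
    (L : C(X, ℂ) →ₗ[ℂ] C(X, ℂ)) : Prop :=
  L 1 = 1 ∧ (∀ f : C(X, ℂ), (∀ x, 0 ≤ f x) → ∀ x, 0 ≤ (L f) x) ∧
    ∀ f g : C(X, ℂ), L (f.comp φ * g) = f * L g

/-!
At each `y`, `L · y` is a positive functional, and the transfer identity
`L ((g ∘ φ) * f) = g * L f` with a bump `g` at `y` shows that it only sees `f` on the fiber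
`φ⁻¹{y}`. A quasi-basis `u` gives the reproducing formula `a x = L (kₓ * a) (φ x)` with
`kₓ = ∑ uᵢ(x) uᵢ*`, and `|kₓ| ≤ ‖∑ |uᵢ|²‖`. Testing it on bumps bounds the number of points in a
fiber by `‖∑ |uᵢ|²‖` and identifies `L` as the fiber sum with weight `ϱ = (∑ |uᵢ|²)⁻¹`; continuity
of `L` on bumps then makes `φ` open and locally injective.

Conversely, a partition of unity `pᵢ` subordinate to charts of `φ` splits a weighted fiber sum
into push-forwards along local inverses of `φ`, which makes it continuous, and on the support of
`pᵢ` each fiber has at most one point, which makes `√(pᵢ / ϱ)` a quasi-basis.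
-/

open Set Function

lemma finsum_mem_eq_single {α M : Type*} [AddCommMonoid M] {s : Set α} {f : α → M} {a : α}
    (ha : a ∈ s) (h : ∀ x ∈ s, x ≠ a → f x = 0) : ∑ᶠ x ∈ s, f x = f a := by
  rw [finsum_mem_def, finsum_eq_single _ a fun x hx => ?_, indicator_of_mem ha]
  by_cases hxs : x ∈ s
  · simp [hxs, h x hxs hx]
  · simp [hxs]

lemma Complex.ofReal_finsum_mem {α : Type*} {s : Set α} (hs : s.Finite) (f : α → ℝ) :
    ((∑ᶠ x ∈ s, f x : ℝ) : ℂ) = ∑ᶠ x ∈ s, (f x : ℂ) := by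
  rw [finsum_mem_eq_finite_toFinset_sum _ hs, finsum_mem_eq_finite_toFinset_sum _ hs]
  push_cast
  rfl

lemma le_one_of_finsum_preimage_eq_one {X Y : Type*} {φ : X → Y} {ϱ : X → ℝ} (hϱ : ∀ x, 0 ≤ ϱ x)
    (hfin : ∀ y, (φ ⁻¹' {y}).Finite) (hcoc : ∀ y, ∑ᶠ x ∈ φ ⁻¹' {y}, ϱ x = 1) (x : X) :
    ϱ x ≤ 1 := by
  rw [← hcoc (φ x), finsum_mem_eq_finite_toFinset_sum _ (hfin _)]
  exact Finset.single_le_sum (fun x _ => hϱ x) ((hfin _).mem_toFinset.2 rfl)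

section Bump

variable {X : Type*} [TopologicalSpace X] [NormalSpace X]

lemma exists_complex_bump {s t : Set X} (hs : IsClosed s) (ht : IsClosed t) (hst : Disjoint s t) :
    ∃ b : C(X, ℂ), EqOn b 0 s ∧ EqOn b 1 t ∧ ∀ x, 0 ≤ b x ∧ b x ≤ 1 := by
  obtain ⟨g, hg0, hg1, hg01⟩ := exists_continuous_zero_one_of_isClosed hs ht hst
  refine ⟨⟨fun x => (g x : ℂ), by fun_prop⟩, fun x hx => by simp [hg0 hx],
    fun x hx => by simp [hg1 hx], fun x => ?_⟩
  simpa [← Complex.ofReal_one, Complex.real_le_real] using hg01 x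

variable [T2Space X]

lemma Finset.exists_bump_family (t : Finset X) :
    ∃ b : X → C(X, ℂ), (∀ x, 0 ≤ b x) ∧ (∀ x, b x x = 1) ∧
      (∀ x ∈ t, ∀ x' ∈ t, x ≠ x' → b x x' = 0) ∧ ∑ x ∈ t, b x ≤ 1 := by
  obtain ⟨U, hU, hdisj⟩ := t.finite_toSet.t2_separation
  have hb : ∀ x, ∃ b : C(X, ℂ), EqOn b 0 (U x)ᶜ ∧ EqOn b 1 {x} ∧ ∀ z, 0 ≤ b z ∧ b z ≤ 1 :=
    fun x => exists_complex_bump (hU x).2.isClosed_compl isClosed_singleton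
      (by simpa using (hU x).1)
  choose b hb0 hb1 hb01 using hb
  have hout : ∀ x ∈ t, ∀ x' ∈ t, x ≠ x' → ∀ z ∈ U x', b x z = 0 := fun x hx x' hx' hne z hz =>
    hb0 x fun hzx => (hdisj hx hx' hne).le_bot ⟨hzx, hz⟩
  refine ⟨b, fun x => ContinuousMap.le_def.2 fun z => (hb01 x z).1, fun x => hb1 x rfl,
    fun x hx x' hx' hne => hout x hx x' hx' hne x' (hU x').1, ContinuousMap.le_def.2 fun z => ?_⟩
  rw [ContinuousMap.sum_apply]
  by_cases hz : ∃ x₀ ∈ t, z ∈ U x₀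
  · obtain ⟨x₀, hx₀, hzx₀⟩ := hz
    rw [Finset.sum_eq_single_of_mem x₀ hx₀ fun x hx hne => hout x hx x₀ hx₀ hne z hzx₀]
    exact (hb01 x₀ z).2
  · push Not at hz
    rw [Finset.sum_eq_zero fun x hx => hb0 x (hz x hx)]
    exact zero_le_one

end Bump

section PositiveMap

variable {X Y : Type*} [TopologicalSpace X] [TopologicalSpace Y]

noncomputable def pointwiseNorm (f : C(X, ℂ)) : C(X, ℂ) := ⟨fun x => (‖f x‖ : ℂ), by fun_prop⟩

@[simp] lemma pointwiseNorm_apply (f : C(X, ℂ)) (x : X) : pointwiseNorm f x = ‖f x‖ := rfl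

lemma pointwiseNorm_nonneg (f : C(X, ℂ)) : 0 ≤ pointwiseNorm f :=
  ContinuousMap.le_def.2 fun x => by simp

variable {L : C(X, ℂ) →ₗ[ℂ] C(Y, ℂ)} (hL : ∀ f, 0 ≤ f → 0 ≤ L f)
include hL

lemma map_mono_of_map_nonneg {f g : C(X, ℂ)} (h : f ≤ g) : L f ≤ L g := by
  simpa using hL (g - f) (sub_nonneg.2 h)

variable [CompactSpace X]

/-- Shifting a real-valued `f` by its sup norm makes it nonnegative. -/
lemma isSelfAdjoint_map_of_map_nonneg {f : C(X, ℂ)} (hf : IsSelfAdjoint f) :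
    IsSelfAdjoint (L f) := by
  have hreal : ∀ x, (f x).im = 0 := fun x => Complex.conj_eq_iff_im.1 (congr($hf x))
  have hshift : 0 ≤ f + (‖f‖ : ℂ) • 1 := ContinuousMap.le_def.2 fun x => by
    have := (Complex.abs_re_le_norm (f x)).trans (f.norm_coe_le_norm x)
    simp only [ContinuousMap.zero_apply, ContinuousMap.add_apply, ContinuousMap.smul_apply,
      ContinuousMap.one_apply, smul_eq_mul, mul_one, Complex.nonneg_iff, Complex.add_re,
      Complex.add_im, Complex.ofReal_re, Complex.ofReal_im, hreal x]
    exact ⟨by linarith [neg_abs_le (f x).re], by simp⟩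
  have hone := hL 1 (ContinuousMap.le_def.2 fun _ => zero_le_one)
  refine ContinuousMap.ext fun y => Complex.conj_eq_iff_im.2 ?_
  have h1 := (Complex.nonneg_iff.1 (ContinuousMap.le_def.1 (hL _ hshift) y)).2
  have h2 := (Complex.nonneg_iff.1 (ContinuousMap.le_def.1 hone y)).2
  simp only [map_add, map_smul, ContinuousMap.add_apply, ContinuousMap.smul_apply,
    smul_eq_mul, Complex.add_im, Complex.mul_im, Complex.ofReal_re, Complex.ofReal_im,
    ← h2] at h1
  linarith

lemma map_realPart_apply (h : C(X, ℂ)) (y : Y) : L (realPart h) y = ((L h y).re : ℂ) := by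
  have hreal : ∀ h : C(X, ℂ), IsSelfAdjoint h → (L h y).im = 0 := fun h hh =>
    Complex.conj_eq_iff_im.1 congr($(isSelfAdjoint_map_of_map_nonneg hL hh) y)
  have hh := congr(L $(realPart_add_I_smul_imaginaryPart h) y)
  rw [map_add, L.map_smul, ContinuousMap.add_apply, ContinuousMap.smul_apply, smul_eq_mul] at hh
  apply Complex.ext
  · simp [← hh, hreal _ (imaginaryPart h).2]
  · simp [hreal _ (realPart h).2]

lemma norm_apply_le_apply_pointwiseNorm (f : C(X, ℂ)) (y : Y) :
    (‖L f y‖ : ℂ) ≤ L (pointwiseNorm f) y := by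
  obtain ⟨c, hc, hcf⟩ := Complex.exists_norm_eq_mul_self (L f y)
  have hre : (‖L f y‖ : ℂ) = L (realPart (c • f)) y := by
    rw [map_realPart_apply hL, map_smul, ContinuousMap.smul_apply, smul_eq_mul, ← hcf]
    simp
  rw [hre]
  refine ContinuousMap.le_def.1 (map_mono_of_map_nonneg hL (ContinuousMap.le_def.2 fun x => ?_)) y
  have hx : (realPart (c • f) : C(X, ℂ)) x = ((c * f x).re : ℂ) := by
    simp only [realPart_apply_coe, ContinuousMap.smul_apply, ContinuousMap.add_apply,
      ContinuousMap.star_apply, Complex.real_smul, Complex.star_def, Complex.add_conj, smul_eq_mul]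
    push_cast
    ring
  rw [hx, pointwiseNorm_apply, Complex.real_le_real]
  calc (c * f x).re ≤ ‖c * f x‖ := Complex.re_le_norm _
    _ = ‖f x‖ := by simp [hc]

end PositiveMap

section TransferOperator

variable {X : Type*} [TopologicalSpace X] {φ : C(X, X)} {L : C(X, ℂ) →ₗ[ℂ] C(X, ℂ)}

lemma IsTransferOpC.map_nonneg (hL : IsTransferOpC φ L) : ∀ f, 0 ≤ f → 0 ≤ L f :=
  fun f hf => ContinuousMap.le_def.2 (hL.2.1 f (ContinuousMap.le_def.1 hf))

variable [CompactSpace X] [T2Space X]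

lemma IsTransferOpC.apply_eq_zero_of_nonneg (hL : IsTransferOpC φ L) {f : C(X, ℂ)} (hf : 0 ≤ f)
    {y : X} (hfy : ∀ x, φ x = y → f x = 0) : L f y = 0 := by
  have hle : ∀ ε : ℝ, 0 < ε → L f y ≤ ε := by
    intro ε hε
    set K := {x | ε ≤ ‖f x‖}
    have hK : IsClosed (φ '' K) :=
      ((isClosed_le continuous_const (by fun_prop)).isCompact.image φ.continuous).isClosed
    have hyK : y ∉ φ '' K := by
      rintro ⟨x, hx, rfl⟩
      have hx' : ε ≤ ‖f x‖ := hx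
      rw [hfy x rfl, norm_zero] at hx'
      linarith
    obtain ⟨g, hg0, hg1, hg01⟩ :=
      exists_complex_bump hK isClosed_singleton (disjoint_singleton_right.2 hyK)
    have hsmall : g.comp φ * f ≤ (ε : ℂ) • 1 := ContinuousMap.le_def.2 fun x => by
      simp only [ContinuousMap.mul_apply, ContinuousMap.comp_apply, ContinuousMap.smul_apply,
        ContinuousMap.one_apply, smul_eq_mul, mul_one]
      have hfx := ContinuousMap.le_def.1 hf x
      by_cases hx : x ∈ K
      · simp [hg0 (mem_image_of_mem φ hx), hε.le]
      · calc g (φ x) * f x ≤ f x := mul_le_of_le_one_left hfx (hg01 _).2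
          _ = ‖f x‖ := (Complex.norm_of_nonneg' hfx).symm
          _ ≤ ε := Complex.real_le_real.2 (not_le.1 hx).le
    calc L f y = L (g.comp φ * f) y := by simp [hL.2.2, hg1 rfl]
      _ ≤ L ((ε : ℂ) • 1) y :=
        ContinuousMap.le_def.1 (map_mono_of_map_nonneg hL.map_nonneg hsmall) y
      _ = ε := by simp [hL.1]
  have h0 := Complex.nonneg_iff.1 (ContinuousMap.le_def.1 (hL.map_nonneg f hf) y)
  refine Complex.ext (le_antisymm (le_of_forall_pos_le_add fun ε hε => ?_) h0.1) (by simp [← h0.2])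
  simpa using (Complex.le_def.1 (hle ε hε)).1

lemma IsTransferOpC.apply_eq_zero (hL : IsTransferOpC φ L) {f : C(X, ℂ)} {y : X}
    (hfy : ∀ x, φ x = y → f x = 0) : L f y = 0 := by
  have h := norm_apply_le_apply_pointwiseNorm hL.map_nonneg f y
  rw [hL.apply_eq_zero_of_nonneg (pointwiseNorm_nonneg f) fun x hx => by simp [hfy x hx],
    ← Complex.ofReal_zero, Complex.real_le_real] at h
  exact norm_le_zero_iff.1 h

lemma IsTransferOpC.apply_eq_sum_of_finite (hL : IsTransferOpC φ L) {y : X}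
    (hfin : (φ ⁻¹' {y}).Finite) {b : X → C(X, ℂ)} (hb1 : ∀ x, b x x = 1)
    (hb0 : ∀ x ∈ hfin.toFinset, ∀ x' ∈ hfin.toFinset, x ≠ x' → b x x' = 0) (a : C(X, ℂ)) :
    L a y = ∑ x ∈ hfin.toFinset, a x * L (b x) y := by
  have h := hL.apply_eq_zero (f := a - ∑ x ∈ hfin.toFinset, a x • b x) (y := y) fun z hz => by
    have hzF : z ∈ hfin.toFinset := by simpa using hz
    simp only [ContinuousMap.sub_apply, ContinuousMap.sum_apply, ContinuousMap.smul_apply,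
      smul_eq_mul]
    rw [Finset.sum_eq_single_of_mem z hzF fun x hx hne => by simp [hb0 x hx z hzF hne], hb1,
      mul_one, sub_self]
  simpa [sub_eq_zero] using h

end TransferOperator

section QuasiBasis

variable {X : Type*} [TopologicalSpace X] {ι : Type*} [Fintype ι]

def IsQuasiBasis (φ : C(X, X)) (L : C(X, ℂ) →ₗ[ℂ] C(X, ℂ)) (u : ι → C(X, ℂ)) : Prop :=
  ∀ a : C(X, ℂ), a = ∑ i, u i * ((L (star (u i) * a)).comp φ)

noncomputable def quasiBasisKernel (u : ι → C(X, ℂ)) (x : X) : C(X, ℂ) :=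
  ∑ i, u i x • star (u i)

noncomputable def sumNormSq (u : ι → C(X, ℂ)) : C(X, ℝ) :=
  ⟨fun x => ∑ i, ‖u i x‖ ^ 2, by fun_prop⟩

lemma quasiBasisKernel_apply_self (u : ι → C(X, ℂ)) (x : X) :
    quasiBasisKernel u x x = sumNormSq u x := by
  simp [quasiBasisKernel, sumNormSq, Complex.mul_conj, Complex.normSq_eq_norm_sq]

lemma norm_quasiBasisKernel_apply_le (u : ι → C(X, ℂ)) (x z : X) :
    ‖quasiBasisKernel u x z‖ ≤ (sumNormSq u x + sumNormSq u z) / 2 := by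
  calc ‖quasiBasisKernel u x z‖ ≤ ∑ i, ‖u i x‖ * ‖u i z‖ := by
        simp only [quasiBasisKernel, ContinuousMap.sum_apply, ContinuousMap.smul_apply,
          ContinuousMap.star_apply, smul_eq_mul]
        exact (norm_sum_le _ _).trans_eq (by simp)
    _ ≤ ∑ i, (‖u i x‖ ^ 2 + ‖u i z‖ ^ 2) / 2 :=
        Finset.sum_le_sum fun i _ => by nlinarith [sq_nonneg (‖u i x‖ - ‖u i z‖)]
    _ = (sumNormSq u x + sumNormSq u z) / 2 := by
        simp only [sumNormSq, ContinuousMap.coe_mk]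
        rw [← Finset.sum_add_distrib, Finset.sum_div]

variable {φ : C(X, X)} {L : C(X, ℂ) →ₗ[ℂ] C(X, ℂ)} {u : ι → C(X, ℂ)}

lemma IsQuasiBasis.apply_eq (hu : IsQuasiBasis φ L u) (a : C(X, ℂ)) (x : X) :
    a x = L (quasiBasisKernel u x * a) (φ x) := by
  conv_lhs => rw [hu a]
  simp [quasiBasisKernel, Finset.sum_mul, smul_mul_assoc, map_sum]

lemma IsQuasiBasis.sumNormSq_pos (hu : IsQuasiBasis φ L u) (x : X) : 0 < sumNormSq u x := by
  refine (Finset.sum_nonneg fun i _ => sq_nonneg ‖u i x‖).lt_of_ne fun h => ?_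
  have hzero : ∀ i, u i x = 0 := fun i => by
    simpa using (Finset.sum_eq_zero_iff_of_nonneg fun i _ => sq_nonneg ‖u i x‖).1 h.symm i
      (Finset.mem_univ i)
  simpa [hzero] using congr($(hu 1) x)

variable [CompactSpace X]

lemma IsTransferOpC.one_le_mul_apply (hL : IsTransferOpC φ L) (hu : IsQuasiBasis φ L u)
    {b : C(X, ℂ)} (hb : 0 ≤ b) {x : X} (hbx : b x = 1) :
    1 ≤ (‖sumNormSq u‖ : ℂ) * L b (φ x) := by
  set M := ‖sumNormSq u‖
  have hS : ∀ z, sumNormSq u z ≤ M := fun z =>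
    (Real.le_norm_self _).trans ((sumNormSq u).norm_coe_le_norm z)
  have hbound : pointwiseNorm (quasiBasisKernel u x * b) ≤ (M : ℂ) • b :=
    ContinuousMap.le_def.2 fun z => by
      have hbz := ContinuousMap.le_def.1 hb z
      have hle : ‖quasiBasisKernel u x z‖ * ‖b z‖ ≤ M * ‖b z‖ :=
        mul_le_mul_of_nonneg_right (by linarith [norm_quasiBasisKernel_apply_le u x z, hS x, hS z])
          (norm_nonneg _)
      calc pointwiseNorm (quasiBasisKernel u x * b) z
          = ((‖quasiBasisKernel u x z‖ * ‖b z‖ : ℝ) : ℂ) := by simp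
        _ ≤ ((M * ‖b z‖ : ℝ) : ℂ) := Complex.real_le_real.2 hle
        _ = ((M : ℂ) • b) z := by simp [Complex.norm_of_nonneg' hbz]
  calc (1 : ℂ) = ‖L (quasiBasisKernel u x * b) (φ x)‖ := by simp [← hu.apply_eq b x, hbx]
    _ ≤ L (pointwiseNorm (quasiBasisKernel u x * b)) (φ x) :=
        norm_apply_le_apply_pointwiseNorm hL.map_nonneg _ _
    _ ≤ L ((M : ℂ) • b) (φ x) :=
        ContinuousMap.le_def.1 (map_mono_of_map_nonneg hL.map_nonneg hbound) _
    _ = M * L b (φ x) := by simp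

variable [T2Space X]

lemma IsTransferOpC.card_le (hL : IsTransferOpC φ L) (hu : IsQuasiBasis φ L u) {y : X}
    {t : Finset X} (ht : ∀ x ∈ t, φ x = y) : (t.card : ℝ) ≤ ‖sumNormSq u‖ := by
  obtain ⟨b, hb0, hb1, -, hsum⟩ := t.exists_bump_family
  set M := ‖sumNormSq u‖
  have hM : (0 : ℂ) ≤ M := Complex.zero_le_real.2 (norm_nonneg _)
  have h : ((t.card : ℝ) : ℂ) ≤ M :=
    calc ((t.card : ℝ) : ℂ) = ∑ x ∈ t, 1 := by simp
      _ ≤ ∑ x ∈ t, M * L (b x) y := Finset.sum_le_sum fun x hx =>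
          ht x hx ▸ hL.one_le_mul_apply hu (hb0 x) (hb1 x)
      _ = M * L (∑ x ∈ t, b x) y := by simp [Finset.mul_sum, map_sum]
      _ ≤ M * L 1 y := mul_le_mul_of_nonneg_left
          (ContinuousMap.le_def.1 (map_mono_of_map_nonneg hL.map_nonneg hsum) y) hM
      _ = M := by simp [hL.1]
  exact Complex.real_le_real.1 h

lemma IsTransferOpC.finite_preimage_singleton (hL : IsTransferOpC φ L) (hu : IsQuasiBasis φ L u)
    (y : X) : (φ ⁻¹' {y}).Finite := by
  by_contra hinf
  obtain ⟨t, hts, hcard⟩ := Set.Infinite.exists_subset_card_eq hinf (⌈‖sumNormSq u‖⌉₊ + 1)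
  have h := hL.card_le hu (t := t) fun x hx => hts hx
  rw [hcard] at h
  push_cast at h
  linarith [Nat.le_ceil ‖sumNormSq u‖]

lemma IsTransferOpC.apply_eq_finsum (hL : IsTransferOpC φ L) (hu : IsQuasiBasis φ L u)
    (a : C(X, ℂ)) (y : X) :
    L a y = ∑ᶠ x ∈ φ ⁻¹' {y}, (((sumNormSq u x)⁻¹ : ℝ) : ℂ) * a x := by
  have hfin := hL.finite_preimage_singleton hu y
  obtain ⟨b, -, hb1, hb0, -⟩ := hfin.toFinset.exists_bump_family
  have hrepr := hL.apply_eq_sum_of_finite hfin hb1 hb0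
  have hweight : ∀ x ∈ hfin.toFinset, L (b x) y = (((sumNormSq u x)⁻¹ : ℝ) : ℂ) := by
    intro x hx
    have hxy : φ x = y := by simpa using hx
    have h := hu.apply_eq (b x) x
    rw [hb1, hxy, hrepr, Finset.sum_eq_single_of_mem x hx fun x' hx' hne => by
      simp [hb0 x hx x' hx' hne.symm], ContinuousMap.mul_apply, hb1, mul_one,
      quasiBasisKernel_apply_self] at h
    rw [Complex.ofReal_inv]
    exact eq_inv_of_mul_eq_one_right h.symm
  rw [finsum_mem_eq_finite_toFinset_sum _ hfin, hrepr]
  exact Finset.sum_congr rfl fun x hx => by rw [hweight x hx, mul_comm]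

lemma IsTransferOpC.exists_weight (hL : IsTransferOpC φ L) (hu : IsQuasiBasis φ L u) :
    ∃ ϱ : C(X, ℝ), (∀ x, 0 < ϱ x) ∧ ∀ a y, L a y = ∑ᶠ x ∈ φ ⁻¹' {y}, (ϱ x : ℂ) * a x :=
  ⟨⟨fun x => (sumNormSq u x)⁻¹, (sumNormSq u).continuous.inv₀ fun x => (hu.sumNormSq_pos x).ne'⟩,
    fun x => inv_pos.2 (hu.sumNormSq_pos x), hL.apply_eq_finsum hu⟩

end QuasiBasis

section LocalHomeomorph

variable {X Y : Type*} [TopologicalSpace X] [TopologicalSpace Y]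

theorem isLocalHomeomorph_of_isOpenMap_of_isLocallyInjective {f : X → Y} (hc : Continuous f)
    (ho : IsOpenMap f) (hi : IsLocallyInjective f) : IsLocalHomeomorph f := by
  refine isLocalHomeomorph_iff_isOpenEmbedding_restrict.2 fun x => ?_
  obtain ⟨U, hU, hxU, hinj⟩ := hi x
  exact ⟨U, hU.mem_nhds hxU, .of_continuous_injective_isOpenMap (hc.comp continuous_subtype_val)
    (injOn_iff_injective.1 hinj) (ho.domRestrict hU)⟩

variable [NormalSpace X] [T1Space X] {φ : X → Y} {ϱ : C(X, ℝ)} (hϱ : ∀ x, 0 < ϱ x)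
  (hfin : ∀ y, (φ ⁻¹' {y}).Finite)
  (hcont : ∀ c : C(X, ℝ), Continuous fun y => ∑ᶠ x ∈ φ ⁻¹' {y}, ϱ x * c x)
include hϱ hfin hcont

lemma isOpenMap_of_continuous_finsum_preimage : IsOpenMap φ := by
  intro W hW
  refine isOpen_iff_forall_mem_open.2 ?_
  rintro _ ⟨x, hxW, rfl⟩
  obtain ⟨c, hc0, hc1, hc01⟩ := exists_continuous_zero_one_of_isClosed hW.isClosed_compl
    isClosed_singleton (disjoint_singleton_right.2 (not_not.2 hxW))
  refine ⟨(fun y => ∑ᶠ x ∈ φ ⁻¹' {y}, ϱ x * c x) ⁻¹' Ioi 0, fun y hy => ?_,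
    isOpen_Ioi.preimage (hcont c), ?_⟩
  · have hy : 0 < ∑ᶠ x ∈ φ ⁻¹' {y}, ϱ x * c x := hy
    obtain ⟨x', hx', hne⟩ := exists_ne_zero_of_finsum_mem_ne_zero hy.ne'
    exact ⟨x', by_contra fun h => hne (by simp [hc0 h]), hx'⟩
  · rw [mem_preimage, mem_Ioi, finsum_mem_eq_finite_toFinset_sum _ (hfin _)]
    refine lt_of_lt_of_le ?_ (Finset.single_le_sum (fun x' _ => mul_nonneg (hϱ x').le (hc01 x').1)
      ((hfin _).mem_toFinset.2 rfl))
    simpa [hc1 rfl] using hϱ x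

/-- A point of `{x | S (φ x) < 2 ϱ(x) a(x)}` carries more than half of the weighted sum `S` of `a`
over its fiber, so no two of its points share a fiber; a bump `a` at `x₀` vanishing on the rest of
the fiber of `x₀` puts `x₀` in it. -/
lemma isLocallyInjective_of_continuous_finsum_preimage (hφ : Continuous φ) :
    IsLocallyInjective φ := by
  classical
  intro x₀
  set F := (hfin (φ x₀)).toFinset
  obtain ⟨a, ha0, ha1, ha01⟩ := exists_continuous_zero_one_of_isClosed
    (F.erase x₀).finite_toSet.isClosed isClosed_singleton
    ((disjoint_singleton_right (a := x₀)).2 (by simp))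
  set S := fun y => ∑ᶠ x ∈ φ ⁻¹' {y}, ϱ x * a x
  have hSsum : ∀ y, S y = ∑ x ∈ (hfin y).toFinset, ϱ x * a x := fun y =>
    finsum_mem_eq_finite_toFinset_sum _ (hfin y)
  have hS : ∀ x x', φ x' = φ x → x' ≠ x → ϱ x * a x + ϱ x' * a x' ≤ S (φ x) := by
    intro x x' hx' hne
    rw [hSsum, ← Finset.sum_pair (f := fun z => ϱ z * a z) hne.symm]
    exact Finset.sum_le_sum_of_subset_of_nonneg (by simp [Set.insert_subset_iff, hx'])
      fun z _ _ => mul_nonneg (hϱ z).le (ha01 z).1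
  refine ⟨{x | S (φ x) < 2 * (ϱ x * a x)}, isOpen_lt ((hcont a).comp hφ) (by fun_prop), ?_, ?_⟩
  · have hx₀ : x₀ ∈ F := (hfin _).mem_toFinset.2 rfl
    change S (φ x₀) < 2 * (ϱ x₀ * a x₀)
    rw [hSsum, Finset.sum_eq_single_of_mem x₀ hx₀ fun x hx hne => by
      simp [ha0 (Finset.mem_erase.2 ⟨hne, hx⟩)], ha1 rfl, Pi.one_apply, mul_one]
    linarith [hϱ x₀]
  · intro x hx x' hx' hφ
    by_contra hne
    have h1 := hS x x' hφ.symm (Ne.symm hne)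
    have h2 := hS x' x hφ hne
    change S (φ x) < 2 * (ϱ x * a x) at hx
    change S (φ x') < 2 * (ϱ x' * a x') at hx'
    rw [hφ] at h1 hx
    linarith

theorem isLocalHomeomorph_of_continuous_finsum_preimage (hφ : Continuous φ) :
    IsLocalHomeomorph φ :=
  isLocalHomeomorph_of_isOpenMap_of_isLocallyInjective hφ
    (isOpenMap_of_continuous_finsum_preimage hϱ hfin hcont)
    (isLocallyInjective_of_continuous_finsum_preimage hϱ hfin hcont hφ)

end LocalHomeomorph

section Weight

variable {X Y : Type*} [TopologicalSpace X] [TopologicalSpace Y] {φ : X → Y}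
  {L : C(X, ℂ) →ₗ[ℂ] C(Y, ℂ)} {ϱ : C(X, ℝ)} (hfin : ∀ y, (φ ⁻¹' {y}).Finite)
  (hrepr : ∀ a y, L a y = ∑ᶠ x ∈ φ ⁻¹' {y}, (ϱ x : ℂ) * a x)
include hfin hrepr

lemma finsum_weight_eq_one (hL1 : L 1 = 1) (y : Y) : ∑ᶠ x ∈ φ ⁻¹' {y}, ϱ x = 1 := by
  have h := hrepr 1 y
  simp only [hL1, ContinuousMap.one_apply, mul_one, ← Complex.ofReal_finsum_mem (hfin y)] at h
  exact_mod_cast h.symm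

lemma continuous_finsum_weight_mul (c : C(X, ℝ)) :
    Continuous fun y => ∑ᶠ x ∈ φ ⁻¹' {y}, ϱ x * c x := by
  have h : ∀ y, ∑ᶠ x ∈ φ ⁻¹' {y}, ϱ x * c x = (L ⟨fun x => (c x : ℂ), by fun_prop⟩ y).re :=
    fun y => by
      simp only [hrepr, ContinuousMap.coe_mk, ← Complex.ofReal_mul,
        ← Complex.ofReal_finsum_mem (hfin y), Complex.ofReal_re]
  exact (Complex.continuous_re.comp (L _).continuous).congr fun y => (h y).symm

end Weight


section FiberSum

variable {X Y : Type*} [TopologicalSpace X] [TopologicalSpace Y] [CompactSpace X] {φ : X → Y}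

lemma IsLocalHomeomorph.finite_preimage_singleton [T1Space Y] (hφ : IsLocalHomeomorph φ)
    (y : Y) : (φ ⁻¹' {y}).Finite := by
  refine (isClosed_singleton.preimage hφ.continuous).isCompact.finite
    (isDiscrete_iff_forall_mem_exists_isOpen.2 fun x hx => ?_)
  obtain ⟨U, hU, hxU, hinj⟩ := hφ.isLocallyInjective x
  refine ⟨U, hU, Subset.antisymm (fun z hz => hinj hz.1 hxU ?_) (by simpa using ⟨hxU, hx⟩)⟩
  rw [mem_preimage, mem_singleton_iff] at hx
  exact hz.2.trans hx.symm

variable {M : Type*} [AddCommMonoid M] [TopologicalSpace M]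

lemma OpenPartialHomeomorph.continuous_finsum_preimage [T2Space Y] (e : OpenPartialHomeomorph X Y)
    (he : φ = e) {h : X → M} (hh : Continuous h) (hsupp : tsupport h ⊆ e.source) :
    Continuous fun y => ∑ᶠ x ∈ φ ⁻¹' {y}, h x := by
  subst he
  have hK : IsClosed (e '' tsupport h) :=
    ((isClosed_tsupport h).isCompact.image_of_continuousOn (e.continuousOn.mono hsupp)).isClosed
  refine continuous_iff_continuousAt.2 fun y => ?_
  by_cases hy : y ∈ e.target
  · refine (hh.continuousAt.comp (e.continuousAt_symm hy)).congr ?_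
    filter_upwards [e.open_target.mem_nhds hy] with z hz
    have hmem : e.symm z ∈ e ⁻¹' {z} := e.right_inv hz
    refine (finsum_mem_eq_single hmem fun x hx hne => ?_).symm
    by_contra hx0
    have hxs := hsupp (subset_tsupport _ hx0)
    exact hne (by rw [← e.left_inv hxs, show e x = z from hx])
  · refine (continuousAt_const (y := (0 : M))).congr ?_
    have hy' : y ∉ e '' tsupport h := fun h' => hy (e.mapsTo.image_subset (image_mono hsupp h'))
    filter_upwards [hK.isOpen_compl.mem_nhds hy'] with z hz
    exact (finsum_mem_of_eqOn_zero fun x hx => by_contra fun hx0 =>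
      hz ⟨x, subset_tsupport _ hx0, hx⟩).symm

variable [T2Space X]

lemma IsLocalHomeomorph.exists_chart_partitionOfUnity (hφ : IsLocalHomeomorph φ) :
    ∃ (N : ℕ) (e : Fin N → OpenPartialHomeomorph X Y) (p : PartitionOfUnity (Fin N) X univ),
      (∀ i, φ = e i) ∧ p.IsSubordinate fun i => (e i).source := by
  choose e he hφe using hφ
  obtain ⟨t, ht⟩ := isCompact_univ.elim_finite_subcover (fun x => (e x).source)
    (fun x => (e x).open_source) fun x _ => mem_iUnion.2 ⟨x, he x⟩
  obtain ⟨p, hp⟩ := PartitionOfUnity.exists_isSubordinate isClosed_univ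
    (fun i => (e (t.equivFin.symm i)).source) (fun i => (e _).open_source) fun x hx => by
      obtain ⟨z, hz, hxz⟩ := mem_iUnion₂.1 (ht hx)
      exact mem_iUnion.2 ⟨t.equivFin ⟨z, hz⟩, by simpa using hxz⟩
  exact ⟨t.card, fun i => e (t.equivFin.symm i), p, fun i => hφe _, hp⟩

variable [T2Space Y]

lemma IsLocalHomeomorph.continuous_finsum_preimage [Module ℝ M] [ContinuousSMul ℝ M]
    [ContinuousAdd M] (hφ : IsLocalHomeomorph φ) {g : X → M}
    (hg : Continuous g) : Continuous fun y => ∑ᶠ x ∈ φ ⁻¹' {y}, g x := by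
  obtain ⟨N, e, p, hφe, hp⟩ := hφ.exists_chart_partitionOfUnity
  have hsplit : (fun y => ∑ᶠ x ∈ φ ⁻¹' {y}, g x) =
      fun y => ∑ i, ∑ᶠ x ∈ φ ⁻¹' {y}, p i x • g x := by
    ext y
    have hfin := hφ.finite_preimage_singleton y
    simp only [finsum_mem_eq_finite_toFinset_sum _ hfin]
    rw [Finset.sum_comm]
    refine Finset.sum_congr rfl fun x _ => ?_
    rw [← Finset.sum_smul, ← finsum_eq_sum_of_fintype, p.sum_eq_one (mem_univ x), one_smul]
  rw [hsplit]
  exact continuous_finsetSum _ fun i _ => (e i).continuous_finsum_preimage (hφe i)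
    ((p i).continuous.smul hg) ((tsupport_smul_subset_left _ _).trans (hp i))

noncomputable def IsLocalHomeomorph.weightedFiberSum (hφ : IsLocalHomeomorph φ) (ϱ : C(X, ℝ)) :
    C(X, ℂ) →ₗ[ℂ] C(Y, ℂ) where
  toFun a := ⟨fun y => ∑ᶠ x ∈ φ ⁻¹' {y}, (ϱ x : ℂ) * a x,
    hφ.continuous_finsum_preimage (by fun_prop)⟩
  map_add' a b := by
    ext y
    simp only [ContinuousMap.coe_mk, ContinuousMap.add_apply, mul_add]
    exact finsum_mem_add_distrib (hφ.finite_preimage_singleton y)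
  map_smul' c a := by
    ext y
    simp only [ContinuousMap.coe_mk, ContinuousMap.smul_apply, smul_eq_mul, RingHom.id_apply,
      mul_finsum_mem, mul_left_comm]

@[simp] lemma IsLocalHomeomorph.weightedFiberSum_apply (hφ : IsLocalHomeomorph φ) (ϱ : C(X, ℝ))
    (a : C(X, ℂ)) (y : Y) :
    hφ.weightedFiberSum ϱ a y = ∑ᶠ x ∈ φ ⁻¹' {y}, (ϱ x : ℂ) * a x := rfl

end FiberSum

section Converse

variable {X : Type*} [TopologicalSpace X] [CompactSpace X] [T2Space X] {φ : C(X, X)}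
  (hφ : IsLocalHomeomorph φ) {ϱ : C(X, ℝ)}
include hφ

lemma IsLocalHomeomorph.isTransferOpC_weightedFiberSum (hsurj : Surjective φ)
    (hϱ : ∀ x, 0 ≤ ϱ x) (hcoc : ∀ x₀, ∑ᶠ x ∈ φ ⁻¹' {φ x₀}, ϱ x = 1) :
    IsTransferOpC φ (hφ.weightedFiberSum ϱ) := by
  refine ⟨?_, fun f hf y => ?_, fun f g => ?_⟩
  · ext y
    obtain ⟨x₀, rfl⟩ := hsurj y
    simp only [weightedFiberSum_apply, ContinuousMap.one_apply, mul_one,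
      ← Complex.ofReal_finsum_mem (hφ.finite_preimage_singleton _), hcoc, Complex.ofReal_one]
  · exact finsum_nonneg fun x => finsum_nonneg fun _ =>
      mul_nonneg (Complex.zero_le_real.2 (hϱ x)) (hf x)
  · ext y
    simp only [weightedFiberSum_apply, ContinuousMap.mul_apply, ContinuousMap.comp_apply,
      mul_finsum_mem]
    exact finsum_mem_congr rfl fun x (hx : φ x = y) => by rw [hx, mul_left_comm]

lemma IsLocalHomeomorph.exists_isQuasiBasis_weightedFiberSum (hϱ : ∀ x, 0 < ϱ x) :
    ∃ (N : ℕ) (u : Fin N → C(X, ℂ)), IsQuasiBasis φ (hφ.weightedFiberSum ϱ) u := by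
  obtain ⟨N, e, p, hφe, hp⟩ := hφ.exists_chart_partitionOfUnity
  let u : Fin N → C(X, ℂ) := fun i =>
    ⟨fun x => (√(p i x / ϱ x) : ℂ), Complex.continuous_ofReal.comp
      ((p i).continuous.div ϱ.continuous fun x => (hϱ x).ne').sqrt⟩
  have hu : ∀ i x, u i x = (√(p i x / ϱ x) : ℂ) := fun _ _ => rfl
  have hstar : ∀ i, star (u i) = u i := fun i => by ext x; simp [hu, Complex.conj_ofReal]
  have hsq : ∀ i x, u i x * ((ϱ x : ℂ) * u i x) = p i x := fun i x => by
    calc u i x * ((ϱ x : ℂ) * u i x) = ((√(p i x / ϱ x) * √(p i x / ϱ x) * ϱ x : ℝ) : ℂ) := by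
          rw [hu]; push_cast; ring
      _ = p i x := by
          rw [Real.mul_self_sqrt (div_nonneg (p.nonneg i x) (hϱ x).le),
            div_mul_cancel₀ _ (hϱ x).ne']
  have hsupp : ∀ i x, u i x ≠ 0 → x ∈ (e i).source := fun i x hx =>
    hp i (subset_tsupport _ fun h0 => hx (by simp [hu, h0]))
  refine ⟨N, u, fun a => ?_⟩
  ext x
  have hterm : ∀ i, u i x * ∑ᶠ x' ∈ φ ⁻¹' {φ x}, (ϱ x' : ℂ) * (u i x' * a x') =
      p i x * a x := fun i => by
    by_cases hx : u i x = 0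
    · simp [← hsq i x, hx]
    rw [finsum_mem_eq_single (s := φ ⁻¹' {φ x}) (a := x) rfl fun x' hx' hne => ?_,
      ← mul_assoc, ← mul_assoc, ← hsq, mul_assoc (u i x)]
    by_cases hx'0 : u i x' = 0
    · simp [hx'0]
    · refine absurd ((e i).injOn (hsupp i x' hx'0) (hsupp i x hx) ?_) hne
      rw [← hφe]
      exact hx'
  calc a x = ∑ i, p i x * a x := by
        rw [← Finset.sum_mul, ← Complex.ofReal_sum, ← finsum_eq_sum_of_fintype,
          p.sum_eq_one (mem_univ x), Complex.ofReal_one, one_mul]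
    _ = _ := by
        simp only [ContinuousMap.sum_apply, ContinuousMap.mul_apply, ContinuousMap.comp_apply,
          weightedFiberSum_apply, hstar, hterm]

end Converse

/-- a transfer operator for `α_φ` of finite type forces `φ` to be a local
homeomorphism and is given by a strictly positive continuous cocycle `ϱ : X → (0,1]` via
`L(a)(y) = ∑_{φ(x)=y} ϱ(x) a(x)`; conversely, any strictly positive continuous cocycle for a
surjective local homeomorphism `φ` defines by this formula a transfer operator of finite type. -/
theorem stmt5 {X : Type*} [TopologicalSpace X] [CompactSpace X] [T2Space X]
    (φ : C(X, X)) (hsurj : Function.Surjective φ) :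
    (∀ L : C(X, ℂ) →ₗ[ℂ] C(X, ℂ), IsTransferOpC φ L →
      (∃ (N : ℕ) (u : Fin N → C(X, ℂ)),
          ∀ a : C(X, ℂ), a = ∑ i, u i * ((L (star (u i) * a)).comp φ)) →
      (IsLocalHomeomorph (⇑φ) ∧
        ∃ ϱ : C(X, ℝ), (∀ x, 0 < ϱ x ∧ ϱ x ≤ 1) ∧
          (∀ x₀ : X, ∑ᶠ x ∈ ⇑φ ⁻¹' {φ x₀}, ϱ x = 1) ∧
          ∀ (a : C(X, ℂ)) (y : X), (L a) y = ∑ᶠ x ∈ ⇑φ ⁻¹' {y}, (ϱ x : ℂ) * a x)) ∧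
    (IsLocalHomeomorph (⇑φ) →
      ∀ ϱ : C(X, ℝ), (∀ x, 0 < ϱ x ∧ ϱ x ≤ 1) →
        (∀ x₀ : X, ∑ᶠ x ∈ ⇑φ ⁻¹' {φ x₀}, ϱ x = 1) →
        ∃ L : C(X, ℂ) →ₗ[ℂ] C(X, ℂ),
          (∀ (a : C(X, ℂ)) (y : X), (L a) y = ∑ᶠ x ∈ ⇑φ ⁻¹' {y}, (ϱ x : ℂ) * a x) ∧
          IsTransferOpC φ L ∧
          ∃ (N : ℕ) (u : Fin N → C(X, ℂ)),
            ∀ a : C(X, ℂ), a = ∑ i, u i * ((L (star (u i) * a)).comp φ)) := by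
  refine ⟨fun L hL ⟨N, u, hu⟩ => ?_, fun hφ ϱ hϱ hcoc => ?_⟩
  · obtain ⟨ϱ, hϱ, hrepr⟩ := hL.exists_weight hu
    have hfin := hL.finite_preimage_singleton hu
    have hcoc := finsum_weight_eq_one hfin hrepr hL.1
    exact ⟨isLocalHomeomorph_of_continuous_finsum_preimage hϱ hfin
        (continuous_finsum_weight_mul hfin hrepr) φ.continuous,
      ϱ, fun x => ⟨hϱ x, le_one_of_finsum_preimage_eq_one (fun x => (hϱ x).le) hfin hcoc x⟩,
      fun x₀ => hcoc (φ x₀), hrepr⟩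
  · exact ⟨hφ.weightedFiberSum ϱ, hφ.weightedFiberSum_apply ϱ,
      hφ.isTransferOpC_weightedFiberSum hsurj (fun x => (hϱ x).1.le) hcoc,
      hφ.exists_isQuasiBasis_weightedFiberSum fun x => (hϱ x).1⟩
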